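/- arXiv:1209.6087 — 2 statements merged into one kernel-verified Lean document; each statement's English description precedes it below -/
import Mathlib

section
/- Suppose a² < 4q and that θ/π is irrational, where θ = arccos(a/(2√q)) ∈ [0, π]. Then limsup_{X→∞} |M(X)|/q^{X/2} = 2·√((q + 1 − a)/(4q − a²)) = √(1 + (a − 2)²/(4q − a²)); in particular, for every ε > 0 there exist infinitely many positive integers X with |M(X)| > (2·√((q + 1 − a)/(4q − a²)) − ε)·q^{X/2}. -/
open Real Filter

/-- The coefficient sequence `c_N` with `c_0 = 1`, `c_1 = a - q - 1`,
`c_2 = a*c_1 - q*c_0 + q`, and `c_N = a*c_{N-1} - q*c_{N-2}` for `N ≥ 3`;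
these are the Taylor coefficients at `u = 0` of `(1-u)(1-qu)/(1-au+qu²)`,
the reciprocal of the zeta function of an elliptic curve over `F_q` with
Frobenius trace `a`. -/
def mertC (q a : ℤ) : ℕ → ℤ
  | 0 => 1
  | 1 => a - q - 1
  | 2 => a * (a - q - 1) - q * 1 + q
  | (N + 3) => a * mertC q a (N + 2) - q * mertC q a (N + 1)

/-- `M(X) = ∑_{N=0}^{X-1} c_N`, the Mertens summatory function of the
Möbius function of an elliptic curve over `F_q` with Frobenius trace `a`. -/
def mertM (q a : ℤ) (X : ℕ) : ℤ := ∑ N ∈ Finset.range X, mertC q a N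

/-!
The sequence `u n = M(n + 1)` satisfies `u (n + 2) = a u (n + 1) - q u n` with `u 0 = 1`,
`u 1 = a - q`. When `a² < 4q` its characteristic roots `z = √q e^{iθ}` and `conj z` are not real,
so `u n = 2 Re (A zⁿ)` for an explicit `A`, and computing `|A|` from the initial values gives
`M(n + 1) = C q^{(n+1)/2} cos (nθ + φ)` with `C = 2 √((q + 1 - a) / (4q - a²))`. Hence
`|M(X)| / q^{X/2} ≤ C`, and since `θ / π` is irrational the orbit `n • 2θ` is dense on the
circle, so `|cos (nθ + φ)|` gets arbitrarily close to `1` infinitely often.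
-/

theorem eq_of_second_order_recurrence {R : Type*} [CommRing R] {a b : R} {u v : ℕ → R}
    (hu : ∀ n, u (n + 2) = a * u (n + 1) - b * u n)
    (hv : ∀ n, v (n + 2) = a * v (n + 1) - b * v n) (h₀ : u 0 = v 0) (h₁ : u 1 = v 1) :
    u = v := by
  funext n
  induction n using Nat.twoStepInduction with
  | zero => exact h₀
  | one => exact h₁
  | more n ih₀ ih₁ => rw [hu, hv, ih₀, ih₁]

namespace Complex
open ComplexConjugate

theorem sq_eq_two_re_mul_sub_normSq (z : ℂ) : z ^ 2 = 2 * z.re * z - normSq z := by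
  rw [← mul_conj, ← ofReal_ofNat, ← ofReal_mul, ← add_conj]
  ring

theorem eq_two_re_mul_pow_of_recurrence {z : ℂ} (hz : z.im ≠ 0) {u : ℕ → ℝ}
    (hu : ∀ n, u (n + 2) = 2 * z.re * u (n + 1) - normSq z * u n) (n : ℕ) :
    u n = 2 * ((u 1 - u 0 * conj z) / (z - conj z) * z ^ n).re := by
  have hsub : z - conj z ≠ 0 := by
    rw [sub_conj]; simpa [Complex.ext_iff] using hz
  have hsub' : conj z - z ≠ 0 := sub_ne_zero.2 (sub_ne_zero.1 hsub).symm
  have hpow (w : ℂ) (hw : w.re = z.re ∧ normSq w = normSq z) (n : ℕ) :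
      w ^ (n + 2) = 2 * z.re * w ^ (n + 1) - normSq z * w ^ n := by
    rw [pow_add, sq_eq_two_re_mul_sub_normSq, hw.1, hw.2]; ring
  set A := (u 1 - u 0 * conj z) / (z - conj z)
  have hconjA : conj A = (u 1 - u 0 * z) / (conj z - z) := by simp [A]
  have key := eq_of_second_order_recurrence (a := 2 * (z.re : ℂ)) (b := (normSq z : ℂ))
    (u := fun n => (u n : ℂ)) (v := fun n => A * z ^ n + conj A * conj z ^ n)
    (fun n => by push_cast [hu]; ring)
    (fun n => by simp only [hpow z ⟨rfl, rfl⟩, hpow (conj z) ⟨conj_re z, normSq_conj z⟩]; ring)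
    (by simp only [hconjA, A]; field_simp; ring)
    (by simp only [hconjA, A]; field_simp; ring)
  apply ofReal_injective
  rw [congrFun key n, ← map_pow, ← map_mul, add_conj]

theorem re_mul_ofReal_mul_exp_mul_I_pow (A : ℂ) (s θ : ℝ) (n : ℕ) :
    (A * (s * exp (θ * I)) ^ n).re = ‖A‖ * s ^ n * Real.cos (n * θ + arg A) := by
  nth_rw 1 [← norm_mul_exp_arg_mul_I A]
  rw [mul_pow, ← exp_nat_mul, mul_mul_mul_comm, ← exp_add, ← ofReal_pow, ← ofReal_mul,
    show arg A * I + n * (θ * I) = ((n * θ + arg A : ℝ) : ℂ) * I by push_cast; ring,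
    re_ofReal_mul, exp_ofReal_mul_I_re]

theorem normSq_sub_conj_div_sub_conj (c : ℝ) (z : ℂ) :
    normSq ((c - conj z) / (z - conj z)) = ((c - z.re) ^ 2 + z.im ^ 2) / (4 * z.im ^ 2) := by
  rw [normSq_div]
  simp only [normSq_apply, sub_re, sub_im, conj_re, conj_im, ofReal_re, ofReal_im]
  ring

theorem normSq_ofReal_mul_exp_mul_I (s θ : ℝ) : normSq (s * exp (θ * I)) = s ^ 2 := by
  rw [normSq_mul, normSq_ofReal, normSq_eq_norm_sq, norm_exp_ofReal_mul_I, one_pow, mul_one, sq]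

theorem re_sqrt_mul_exp_arccos_mul_I {q a : ℝ} (ha : a ^ 2 < 4 * q) :
    (√q * exp (arccos (a / (2 * √q)) * I)).re = a / 2 := by
  have hq : 0 < q := by nlinarith [sq_nonneg a]
  have hs : 0 < 2 * √q := by positivity
  have ha' : |a| < 2 * √q := abs_lt_of_sq_lt_sq (by rw [mul_pow, sq_sqrt hq.le]; linarith) hs.le
  have hx : |a / (2 * √q)| ≤ 1 := by
    rw [abs_div, abs_of_pos hs, div_le_one hs]; exact ha'.le
  rw [re_ofReal_mul, exp_ofReal_mul_I_re, cos_arccos (abs_le.1 hx).1 (abs_le.1 hx).2]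
  field_simp

end Complex

theorem mertM_one (q a : ℤ) : mertM q a 1 = 1 := rfl

theorem mertM_two (q a : ℤ) : mertM q a 2 = a - q := by
  simp [mertM, Finset.sum_range_succ, mertC]

theorem mertM_add_three (q a : ℤ) (n : ℕ) :
    mertM q a (n + 3) = a * mertM q a (n + 2) - q * mertM q a (n + 1) := by
  induction n with
  | zero => simp only [mertM, Finset.sum_range_succ, Finset.sum_range_zero, mertC]; ring
  | succ n ih =>
    simp only [mertM, Finset.sum_range_succ] at ih ⊢
    rw [show mertC q a (n + 3) = a * mertC q a (n + 2) - q * mertC q a (n + 1) from rfl]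
    linear_combination ih

open Complex ComplexConjugate in
theorem mertM_succ_eq_mul_cos (q a : ℤ) (ha : a ^ 2 < 4 * q) : ∃ φ : ℝ, ∀ n : ℕ,
    (mertM q a (n + 1) : ℝ) = 2 * √((q + 1 - a) / (4 * q - a ^ 2)) * √q ^ (n + 1) *
      Real.cos (n * arccos (a / (2 * √q)) + φ) := by
  have ha' : (a : ℝ) ^ 2 < 4 * q := by exact_mod_cast ha
  have hq : (0 : ℝ) ≤ q := by nlinarith [sq_nonneg (a : ℝ)]
  set z : ℂ := √q * exp (arccos (a / (2 * √q)) * I)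
  have hre : z.re = a / 2 := re_sqrt_mul_exp_arccos_mul_I ha'
  have hnormSq : normSq z = q := by rw [normSq_ofReal_mul_exp_mul_I, sq_sqrt hq]
  have him : z.im ^ 2 = q - a ^ 2 / 4 := by
    rw [← hnormSq, normSq_apply, hre]; ring
  have him0 : z.im ≠ 0 := by
    intro h; rw [h] at him; nlinarith
  set u : ℕ → ℝ := fun n => mertM q a (n + 1)
  have hu (n : ℕ) : u (n + 2) = 2 * z.re * u (n + 1) - normSq z * u n := by
    simp only [u, hre, hnormSq, mertM_add_three]
    push_cast; ring
  have hu₀ : u 0 = 1 := by simp [u, mertM_one]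
  have hu₁ : u 1 = a - q := by simp [u, mertM_two]
  have hA : ‖(((a - q : ℝ) : ℂ) - conj z) / (z - conj z)‖ =
      √q * √((q + 1 - a) / (4 * q - a ^ 2)) := by
    rw [norm_def, normSq_sub_conj_div_sub_conj, hre, him, ← sqrt_mul hq]
    congr 1
    field_simp
    ring
  refine ⟨arg ((((a - q : ℝ) : ℂ) - conj z) / (z - conj z)), fun n => ?_⟩
  rw [show (mertM q a (n + 1) : ℝ) = u n from rfl, eq_two_re_mul_pow_of_recurrence him0 hu,
    hu₀, hu₁, ofReal_one, one_mul, re_mul_ofReal_mul_exp_mul_I_pow, hA]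
  ring

theorem mapClusterPt_one_abs_cos_nat_mul_add {θ : ℝ} (hθ : Irrational (θ / π)) (φ : ℝ) :
    MapClusterPt 1 atTop (fun n : ℕ => |cos (n * θ + φ)|) := by
  have : Fact (0 < 2 * π) := ⟨two_pi_pos⟩
  have : CompactSpace Angle := inferInstanceAs (CompactSpace (AddCircle (2 * π)))
  have hdense : DenseRange (fun n : ℕ => n • ((2 * θ : ℝ) : Angle)) :=
    denseRange_zsmul_iff_nsmul.1 <| AddCircle.denseRange_zsmul_coe_iff.2 <| by
      rwa [mul_div_mul_left _ _ two_ne_zero]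
  have hclust :
      MapClusterPt ((-(2 * φ) : ℝ) : Angle) atTop (fun n : ℕ => n • ((2 * θ : ℝ) : Angle)) :=
    ((mapClusterPt_atTop_nsmul_tfae _ _).out 0 2).2 (hdense.closure_range ▸ Set.mem_univ _)
  -- `|cos x| = √((1 + cos 2x) / 2)` only depends on `2x` modulo `2π`.
  have hcont : Continuous fun x : Angle => √((1 + Angle.cos (x + ((2 * φ : ℝ) : Angle))) / 2) :=
    ((continuous_const.add (Angle.continuous_cos.comp (continuous_add_const _))).div_const _).sqrt
  convert hclust.continuousAt_comp hcont.continuousAt using 1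
  · simp
  · ext n
    simp only [Function.comp_apply, ← Angle.coe_nsmul, ← Angle.coe_add, Angle.cos_coe, nsmul_eq_mul]
    rw [← sqrt_sq_eq_abs, cos_sq]
    ring_nf

theorem limsup_eq_of_forall_le_of_mapClusterPt {ι : Type*} {F : Filter ι} {u : ι → ℝ} {c : ℝ}
    (hle : ∀ i, u i ≤ c) (hc : MapClusterPt c F u) : limsup u F = c := by
  have hfreq : ∀ b < c, ∃ᶠ i in F, b ≤ u i := fun b hb => hc.frequently (eventually_ge_nhds hb)
  refine le_antisymm (limsup_le_of_le ?_ (.of_forall hle)) ?_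
  · exact IsCoboundedUnder.of_frequently_ge (hfreq (c - 1) (sub_one_lt c))
  · exact le_of_forall_lt_imp_le_of_dense fun b hb =>
      le_limsup_of_frequently_le (hfreq b hb) (isBoundedUnder_of ⟨c, hle⟩)

theorem two_mul_sqrt_div_eq_sqrt_one_add (q a : ℝ) (h : 4 * q - a ^ 2 ≠ 0) :
    2 * √((q + 1 - a) / (4 * q - a ^ 2)) = √(1 + (a - 2) ^ 2 / (4 * q - a ^ 2)) := by
  rw [← sqrt_sq zero_le_two, ← sqrt_mul (sq_nonneg 2), ← mul_div_assoc, one_add_div h]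
  congr 1
  ring

theorem mertens_limsup_irrational_angle_general (q a : ℤ) (ha : a ^ 2 < 4 * q)
    (hθ : Irrational (Real.arccos ((a : ℝ) / (2 * Real.sqrt (q : ℝ))) / Real.pi)) :
    Filter.limsup (fun X : ℕ => |(mertM q a X : ℝ)| / (q : ℝ) ^ ((X : ℝ) / 2)) Filter.atTop =
      2 * Real.sqrt (((q : ℝ) + 1 - (a : ℝ)) / (4 * (q : ℝ) - (a : ℝ) ^ 2)) ∧
    2 * Real.sqrt (((q : ℝ) + 1 - (a : ℝ)) / (4 * (q : ℝ) - (a : ℝ) ^ 2)) =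
      Real.sqrt (1 + ((a : ℝ) - 2) ^ 2 / (4 * (q : ℝ) - (a : ℝ) ^ 2)) ∧
    ∀ ε : ℝ, 0 < ε → ∀ X₀ : ℕ, ∃ X : ℕ, X₀ ≤ X ∧ 1 ≤ X ∧
      |(mertM q a X : ℝ)| >
        (2 * Real.sqrt (((q : ℝ) + 1 - (a : ℝ)) / (4 * (q : ℝ) - (a : ℝ) ^ 2)) - ε) *
          (q : ℝ) ^ ((X : ℝ) / 2) := by
  have ha' : (a : ℝ) ^ 2 < 4 * q := by exact_mod_cast ha
  have hq : (0 : ℝ) < q := by nlinarith [sq_nonneg (a : ℝ)]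
  obtain ⟨φ, hM⟩ := mertM_succ_eq_mul_cos q a ha
  set C := 2 * √(((q : ℝ) + 1 - a) / (4 * q - a ^ 2))
  set θ := arccos ((a : ℝ) / (2 * √q))
  set f : ℕ → ℝ := fun X => |(mertM q a X : ℝ)| / (q : ℝ) ^ ((X : ℝ) / 2)
  have hf (n : ℕ) : f (n + 1) = C * |cos (n * θ + φ)| := by
    simp only [f]
    rw [hM n, rpow_div_two_eq_sqrt _ hq.le, rpow_natCast, abs_mul, abs_mul,
      abs_of_nonneg (by positivity : 0 ≤ C), abs_of_pos (by positivity : 0 < √(q : ℝ) ^ (n + 1))]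
    field_simp
  have hle : ∀ X, f X ≤ C
    | 0 => by simp [f, mertM, C]
    | n + 1 => by rw [hf]; exact mul_le_of_le_one_right (by positivity) (abs_cos_le_one _)
  have hclust : MapClusterPt C atTop f := by
    refine MapClusterPt.of_comp (tendsto_add_atTop_nat 1) ?_
    convert (mapClusterPt_one_abs_cos_nat_mul_add hθ φ).continuousAt_comp
      (continuous_const_mul C).continuousAt using 1
    · simp
    · funext n; simp [hf]
  refine ⟨limsup_eq_of_forall_le_of_mapClusterPt hle hclust,
    two_mul_sqrt_div_eq_sqrt_one_add _ _ (sub_pos.2 ha').ne', fun ε hε X₀ => ?_⟩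
  obtain ⟨X, hX, hfX⟩ := (hclust.frequently (eventually_gt_nhds (sub_lt_self C hε))
    ).forall_exists_of_atTop (max X₀ 1)
  exact ⟨X, le_of_max_le_left hX, le_of_max_le_right hX,
    (lt_div_iff₀ (rpow_pos_of_pos hq _)).1 hfX⟩

theorem mertens_limsup_irrational_angle (q a : ℤ) (hq : 2 ≤ q) (ha : a ^ 2 < 4 * q)
    (hθ : Irrational (Real.arccos ((a : ℝ) / (2 * Real.sqrt (q : ℝ))) / Real.pi)) :
    Filter.limsup (fun X : ℕ => |(mertM q a X : ℝ)| / (q : ℝ) ^ ((X : ℝ) / 2)) Filter.atTop =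
      2 * Real.sqrt (((q : ℝ) + 1 - (a : ℝ)) / (4 * (q : ℝ) - (a : ℝ) ^ 2)) ∧
    2 * Real.sqrt (((q : ℝ) + 1 - (a : ℝ)) / (4 * (q : ℝ) - (a : ℝ) ^ 2)) =
      Real.sqrt (1 + ((a : ℝ) - 2) ^ 2 / (4 * (q : ℝ) - (a : ℝ) ^ 2)) ∧
    ∀ ε : ℝ, 0 < ε → ∀ X₀ : ℕ, ∃ X : ℕ, X₀ ≤ X ∧ 1 ≤ X ∧
      |(mertM q a X : ℝ)| >
        (2 * Real.sqrt (((q : ℝ) + 1 - (a : ℝ)) / (4 * (q : ℝ) - (a : ℝ) ^ 2)) - ε) *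
          (q : ℝ) ^ ((X : ℝ) / 2) :=
  mertens_limsup_irrational_angle_general q a ha hθ
end

section
/- Suppose q = 2 and a = 2 (so a = √(2q) with m = 1). Then |M(X)| ≤ 2^{X/2} for every positive integer X, with equality if and only if X ≡ 0 (mod 4); in particular equality occurs infinitely often. -/
open Real Filter

lemma mertC_add_five (N : ℕ) : mertC 2 2 (N + 5) = -4 * mertC 2 2 (N + 1) := by
  show mertC 2 2 (N + 2 + 3) = -4 * mertC 2 2 (N + 1)
  rw [mertC]
  show 2 * mertC 2 2 (N + 1 + 3) - 2 * mertC 2 2 (N + 3) = _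
  rw [mertC, mertC]
  ring

lemma mertM_succ (X : ℕ) : mertM 2 2 (X + 1) = mertM 2 2 X + mertC 2 2 X := by
  simp [mertM, Finset.sum_range_succ]

lemma mertM_period (Y : ℕ) : mertM 2 2 (Y + 5) = -4 * mertM 2 2 (Y + 1) := by
  induction Y with
  | zero => decide
  | succ n ih =>
      have h1 : mertM 2 2 (n + 1 + 5) = mertM 2 2 (n + 5) + mertC 2 2 (n + 5) :=
        mertM_succ (n + 5)
      have h2 : mertM 2 2 (n + 1 + 1) = mertM 2 2 (n + 1) + mertC 2 2 (n + 1) :=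
        mertM_succ (n + 1)
      rw [h1, h2, ih, mertC_add_five]; ring

lemma M1 (k : ℕ) : mertM 2 2 (4 * k + 1) = (-4) ^ k := by
  induction k with
  | zero => decide
  | succ n ih =>
      rw [show 4 * (n + 1) + 1 = 4 * n + 5 by ring, mertM_period (4 * n), ih]; ring

lemma M2 (k : ℕ) : mertM 2 2 (4 * k + 2) = 0 := by
  induction k with
  | zero => decide
  | succ n ih =>
      rw [show 4 * (n + 1) + 2 = 4 * n + 1 + 5 by ring, mertM_period (4 * n + 1),
        show 4 * n + 1 + 1 = 4 * n + 2 from rfl, ih]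
      ring

lemma M3 (k : ℕ) : mertM 2 2 (4 * k + 3) = -2 * (-4) ^ k := by
  induction k with
  | zero => decide
  | succ n ih =>
      rw [show 4 * (n + 1) + 3 = 4 * n + 2 + 5 by ring, mertM_period (4 * n + 2),
        show 4 * n + 2 + 1 = 4 * n + 3 from rfl, ih]
      ring

lemma M4 (k : ℕ) : mertM 2 2 (4 * k + 4) = (-4) ^ (k + 1) := by
  induction k with
  | zero => decide
  | succ n ih =>
      rw [show 4 * (n + 1) + 4 = 4 * n + 3 + 5 by ring, mertM_period (4 * n + 3),
        show 4 * n + 3 + 1 = 4 * n + 4 from rfl, ih]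
      ring

lemma rpow_nat (n : ℕ) : (2 : ℝ) ^ ((n : ℕ) : ℝ) = (2 : ℝ) ^ n :=
  Real.rpow_natCast 2 n

lemma abs4 : |(-4 : ℝ)| = 4 := by norm_num

lemma key (X : ℕ) (hX : 1 ≤ X) :
    |(mertM 2 2 X : ℝ)| ≤ (2 : ℝ) ^ ((X : ℝ) / 2) ∧
    (|(mertM 2 2 X : ℝ)| = (2 : ℝ) ^ ((X : ℝ) / 2) ↔ X % 4 = 0) := by
  have h2 : (1 : ℝ) < 2 := one_lt_two
  obtain ⟨k, r, hr, rfl⟩ : ∃ k r, r < 4 ∧ X = 4 * k + r :=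
    ⟨X / 4, X % 4, Nat.mod_lt _ (by norm_num), (Nat.div_add_mod X 4).symm⟩
  interval_cases r
  · -- r = 0, X = 4k, k ≥ 1
    obtain ⟨m, rfl⟩ : ∃ m, k = m + 1 := ⟨k - 1, by omega⟩
    have hM : mertM 2 2 (4 * (m + 1) + 0) = (-4) ^ (m + 1) := by
      rw [show 4 * (m + 1) + 0 = 4 * m + 4 by ring]; exact M4 m
    have habs : |(mertM 2 2 (4 * (m + 1) + 0) : ℝ)| = (2:ℝ) ^ (2 * (m + 1)) := by
      rw [hM]; push_cast
      rw [abs_pow, abs4, show (4:ℝ) = 2 ^ 2 by norm_num, ← pow_mul]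
    have hre : (2 : ℝ) ^ (((4 * (m + 1) + 0 : ℕ) : ℝ) / 2) = (2:ℝ) ^ (2 * (m + 1)) := by
      rw [show (((4 * (m + 1) + 0 : ℕ) : ℝ) / 2) = ((2 * (m + 1) : ℕ) : ℝ) by push_cast; ring,
        rpow_nat]
    rw [habs, hre]
    refine ⟨le_refl _, ?_⟩
    simp [Nat.add_mul_mod_self_left]
  · -- r = 1
    have habs : |(mertM 2 2 (4 * k + 1) : ℝ)| = (2:ℝ) ^ (2 * k) := by
      rw [M1]; push_cast
      rw [abs_pow, abs4, show (4:ℝ) = 2 ^ 2 by norm_num, ← pow_mul]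
    have hlt : |(mertM 2 2 (4 * k + 1) : ℝ)| < (2:ℝ) ^ (((4 * k + 1 : ℕ):ℝ)/2) := by
      rw [habs, ← rpow_nat (2 * k)]
      apply Real.rpow_lt_rpow_left_iff h2 |>.mpr
      push_cast; linarith
    refine ⟨hlt.le, ?_⟩
    exact ⟨fun h => absurd h hlt.ne, fun h => by omega⟩
  · -- r = 2
    have hpos : (0:ℝ) < (2:ℝ) ^ (((4 * k + 2 : ℕ):ℝ)/2) := Real.rpow_pos_of_pos (by norm_num) _
    have habs : |(mertM 2 2 (4 * k + 2) : ℝ)| = 0 := by rw [M2]; simp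
    rw [habs]
    exact ⟨hpos.le, ⟨fun h => absurd h.symm hpos.ne', fun h => by omega⟩⟩
  · -- r = 3
    have habs : |(mertM 2 2 (4 * k + 3) : ℝ)| = (2:ℝ) ^ (2 * k + 1) := by
      rw [M3]; push_cast
      rw [abs_mul, abs_pow, abs4, show |(-2:ℝ)| = 2 by norm_num,
        show (4:ℝ) = 2 ^ 2 by norm_num, ← pow_mul, pow_succ]
      ring
    have hlt : |(mertM 2 2 (4 * k + 3) : ℝ)| < (2:ℝ) ^ (((4 * k + 3 : ℕ):ℝ)/2) := by
      rw [habs, ← rpow_nat (2 * k + 1)]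
      apply Real.rpow_lt_rpow_left_iff h2 |>.mpr
      push_cast; linarith
    refine ⟨hlt.le, ?_⟩
    exact ⟨fun h => absurd h hlt.ne, fun h => by omega⟩

theorem mertens_case_q_two_trace_two :
    (∀ X : ℕ, 1 ≤ X → |(mertM 2 2 X : ℝ)| ≤ (2 : ℝ) ^ ((X : ℝ) / 2)) ∧
    (∀ X : ℕ, 1 ≤ X →
      (|(mertM 2 2 X : ℝ)| = (2 : ℝ) ^ ((X : ℝ) / 2) ↔ X % 4 = 0)) ∧
    ∀ X₀ : ℕ, ∃ X : ℕ, X₀ ≤ X ∧ 1 ≤ X ∧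
      |(mertM 2 2 X : ℝ)| = (2 : ℝ) ^ ((X : ℝ) / 2) := by
  refine ⟨fun X hX => (key X hX).1, fun X hX => (key X hX).2, fun X₀ => ?_⟩
  refine ⟨4 * X₀ + 4, by omega, by omega, ?_⟩
  exact (key (4 * X₀ + 4) (by omega)).2.mpr (by omega)
end
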